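/- arXiv:1801.06088 — 2 statements merged into one kernel-verified Lean document; each statement's English description precedes it below -/
import Mathlib

section
/- Let $L$ satisfy $L(x,u,v)\ge L_0(x,v)-K|u|$, $L_0(x,v)\ge\theta_0(|v|)-c_0$ with $\theta_0:[0,\infty)\to[0,\infty)$ nondecreasing with $\theta_0(0)=0$. Let $\xi:[0,t]\to\mathbb{R}^n$ and $u_\xi:[0,t]\to\mathbb{R}$ be absolutely continuous with $\dot u_\xi(s)=L(\xi(s),u_\xi(s),\dot\xi(s))$ a.e. and $u_\xi(0)=u\le 0$. Then $u_\xi(t)\ge e^{Kt}u + e^{-Kt}\int_0^t\theta_0(|\dot\xi(s)|)\,ds - c_0 t e^{Kt}$. -/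
/-!
Write `P s = u + ∫₀ˢ ℓ`, where `ℓ ≥ θ - c₀ - K |P|`. First `P s ≥ e^{Ks} (u - c₀ s)`: on an
interval where this barrier fails, `P < 0`, so `ℓ - K P ≥ -c₀` and `e^{-Ks} P + c₀ s` is
nondecreasing there, which contradicts the barrier holding at the left end. As the barrier is
`≤ 0`, it gives `K (P - |P|) ≥ 2K e^{Ks} (u - c₀ s)`, hence, using `e^{Ks} ≥ 1`,
`(e^{Ks} P)' ≥ e^{Ks} (θ - c₀) + 2K e^{2Ks} (u - c₀ s) ≥ θ + (e^{2Ks} (u - c₀ s))'` a.e.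
Integrating over `[0, t]` gives `e^{Kt} P t ≥ e^{2Kt} (u - c₀ t) + ∫₀ᵗ θ`.
-/

open MeasureTheory Set Real

theorem AbsolutelyContinuousOnInterval.le_of_ae_hasDerivAt_nonneg {f f' : ℝ → ℝ} {a b : ℝ}
    (hf : AbsolutelyContinuousOnInterval f a b) (hab : a ≤ b)
    (hderiv : ∀ᵐ x, x ∈ Ioo a b → HasDerivAt f (f' x) x) (hf' : ∀ x ∈ Ioo a b, 0 ≤ f' x) :
    f a ≤ f b := by
  rw [← sub_nonneg, ← hf.integral_deriv_eq_sub]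
  refine intervalIntegral.integral_nonneg_of_ae_restrict hab ?_
  rw [← restrict_Ioo_eq_restrict_Icc]
  filter_upwards [ae_restrict_mem measurableSet_Ioo, ae_restrict_of_ae hderiv] with x hx hdx
  exact (hdx hx).deriv ▸ hf' x hx

theorem ContinuousOn.nonneg_of_forall_Ioc_neg_imp_le {h : ℝ → ℝ} {a b : ℝ}
    (hc : ContinuousOn h (Icc a b)) (ha : 0 ≤ h a)
    (hstep : ∀ x ∈ Ico a b, ∀ y ∈ Ioc x b, (∀ r ∈ Ioc x y, h r < 0) → h x ≤ h y) :
    ∀ y ∈ Icc a b, 0 ≤ h y := by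
  have hclosed : IsClosed (h ⁻¹' Ici 0 ∩ Icc a b) := by
    rw [inter_comm]; exact hc.preimage_isClosed_of_isClosed isClosed_Icc isClosed_Ici
  refine hclosed.Icc_subset_of_forall_exists_gt ha fun x ⟨hx, hxab⟩ y hxy => ?_
  by_contra hempty
  have hneg : ∀ r ∈ Ioc x (min y b), h r < 0 := fun r hr =>
    not_le.mp fun hr' => hempty ⟨r, hr', hr.1, hr.2.trans (min_le_left y b)⟩
  have hz : min y b ∈ Ioc x b := ⟨lt_min hxy hxab.2, min_le_right y b⟩
  exact (hneg _ ⟨hz.1, le_rfl⟩).not_ge (le_trans hx (hstep x hxab _ hz hneg))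

section Primitive

variable {ℓ : ℝ → ℝ} {a b : ℝ}

theorem IntervalIntegrable.absolutelyContinuousOnInterval_exp_mul_add_integral
    (hℓ : IntervalIntegrable ℓ volume a b) (c v : ℝ) :
    AbsolutelyContinuousOnInterval (fun s => exp (c * s) * (v + ∫ σ in a..s, ℓ σ)) a b := by
  have hexp : ContDiff ℝ 1 fun s => exp (c * s) := by fun_prop
  exact hexp.contDiffOn.absolutelyContinuousOnInterval.fun_mul
    (contDiffOn_const.absolutelyContinuousOnInterval.fun_add
      (hℓ.absolutelyContinuousOnInterval_intervalIntegral left_mem_uIcc))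

theorem IntervalIntegrable.ae_hasDerivAt_exp_mul_add_integral
    (hℓ : IntervalIntegrable ℓ volume a b) (c v : ℝ) :
    ∀ᵐ x, x ∈ uIcc a b → HasDerivAt (fun s => exp (c * s) * (v + ∫ σ in a..s, ℓ σ))
      (exp (c * x) * (ℓ x + c * (v + ∫ σ in a..x, ℓ σ))) x := by
  filter_upwards [hℓ.ae_hasDerivAt_integral] with x hx hxI
  have hexp : HasDerivAt (fun s => exp (c * s)) (exp (c * x) * c) x := by
    simpa using ((hasDerivAt_id x).const_mul c).exp
  exact (hexp.mul ((hx hxI a left_mem_uIcc).const_add v)).congr_deriv (by ring)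

end Primitive

section Comparison

variable {K c₀ u t : ℝ} {ℓ : ℝ → ℝ}

theorem exp_mul_mul_sub_le_add_integral (hK : 0 ≤ K) (hc₀ : 0 ≤ c₀) (hu : u ≤ 0)
    (hℓ : IntervalIntegrable ℓ volume 0 t)
    (hℓ_ge : ∀ τ ∈ Icc 0 t, -c₀ - K * |u + ∫ σ in 0..τ, ℓ σ| ≤ ℓ τ) :
    ∀ s ∈ Icc 0 t, exp (K * s) * (u - c₀ * s) ≤ u + ∫ σ in 0..s, ℓ σ := by
  set P : ℝ → ℝ := fun s => u + ∫ σ in 0..s, ℓ σ with hP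
  have hsign : ∀ s,
      exp (K * s) * (u - c₀ * s) ≤ P s ↔ 0 ≤ exp (-K * s) * P s + (c₀ * s - u) := by
    intro s
    rw [neg_mul, exp_neg, ← le_inv_mul_iff₀ (exp_pos _)]
    constructor <;> intro h <;> linarith
  have hac : AbsolutelyContinuousOnInterval (fun s => exp (-K * s) * P s + (c₀ * s - u)) 0 t :=
    (hℓ.absolutelyContinuousOnInterval_exp_mul_add_integral (-K) u).fun_add
      (by fun_prop : ContDiff ℝ 1 fun s => c₀ * s - u).contDiffOn.absolutelyContinuousOnInterval
  intro s hs
  have ht : 0 ≤ t := hs.1.trans hs.2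
  rw [hsign]
  refine (uIcc_of_le ht ▸ hac.continuousOn).nonneg_of_forall_Ioc_neg_imp_le
    (by simp [hP]) (fun x hx y hy hneg => ?_) s hs
  have hxy : uIcc x y ⊆ uIcc 0 t := by
    rw [uIcc_of_le ht, uIcc_of_le hy.1.le]; exact Icc_subset_Icc hx.1 hy.2
  refine (hac.mono hxy).le_of_ae_hasDerivAt_nonneg hy.1.le
    (f' := fun r => exp (-K * r) * (ℓ r + -K * P r) + c₀) ?_ (fun r hr => ?_)
  · filter_upwards [hℓ.ae_hasDerivAt_exp_mul_add_integral (-K) u] with r hr hrxy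
    exact (hr (hxy (Ioo_subset_Icc_self.trans Icc_subset_uIcc hrxy))).add
      (((hasDerivAt_id r).const_mul c₀).sub_const u |>.congr_deriv (mul_one c₀))
  · have hr0 : 0 ≤ r := hx.1.trans hr.1.le
    have hrt : r ≤ t := hr.2.le.trans hy.2
    have hPr : P r < 0 := by
      have := hneg r ⟨hr.1, hr.2.le⟩
      rw [← not_le, ← hsign, not_le] at this
      exact this.trans_le (mul_nonpos_of_nonneg_of_nonpos (exp_pos _).le (by nlinarith))
    have hℓr : -c₀ ≤ ℓ r + -K * P r := by
      have := hℓ_ge r ⟨hr0, hrt⟩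
      rw [abs_of_neg hPr] at this
      linarith
    have hexp : exp (-K * r) ≤ 1 := exp_le_one_iff.mpr (by nlinarith)
    show 0 ≤ exp (-K * r) * (ℓ r + -K * P r) + c₀
    nlinarith [exp_pos (-K * r)]

theorem add_exp_two_mul_mul_le_exp_mul_mul_add {r θ P ℓ : ℝ} (hK : 0 ≤ K) (hc₀ : 0 ≤ c₀)
    (hu : u ≤ 0) (hr : 0 ≤ r) (hθ : 0 ≤ θ) (hP : exp (K * r) * (u - c₀ * r) ≤ P)
    (hℓ : θ - c₀ - K * |P| ≤ ℓ) :
    θ + exp (2 * K * r) * (2 * K * (u - c₀ * r) - c₀) ≤ exp (K * r) * (ℓ + K * P) := by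
  have hq : exp (K * r) * (u - c₀ * r) ≤ 0 :=
    mul_nonpos_of_nonneg_of_nonpos (exp_pos _).le (by nlinarith)
  have habs : |P| ≤ P - 2 * (exp (K * r) * (u - c₀ * r)) := by
    rcases abs_cases P with ⟨h, _⟩ | ⟨h, _⟩ <;> rw [h] <;> linarith
  have hℓP : θ - c₀ + 2 * K * (exp (K * r) * (u - c₀ * r)) ≤ ℓ + K * P := by
    nlinarith [mul_le_mul_of_nonneg_left habs hK]
  have he : 1 ≤ exp (K * r) := one_le_exp (mul_nonneg hK hr)
  have hexp2 : exp (2 * K * r) = exp (K * r) * exp (K * r) := by rw [← exp_add]; ring_nf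
  rw [hexp2]
  nlinarith [mul_le_mul_of_nonneg_left hℓP (exp_pos (K * r)).le,
    mul_nonneg (sub_nonneg.2 he) hθ,
    mul_nonneg hc₀ (mul_nonneg (exp_pos (K * r)).le (sub_nonneg.2 he))]

theorem exp_mul_mul_add_exp_neg_mul_integral_sub_le_add_integral {θ : ℝ → ℝ}
    (hK : 0 ≤ K) (hc₀ : 0 ≤ c₀) (hu : u ≤ 0) (ht : 0 ≤ t)
    (hℓ : IntervalIntegrable ℓ volume 0 t) (hθ : IntervalIntegrable θ volume 0 t)
    (hθ_nonneg : ∀ τ ∈ Icc 0 t, 0 ≤ θ τ)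
    (hℓ_ge : ∀ τ ∈ Icc 0 t, θ τ - c₀ - K * |u + ∫ σ in 0..τ, ℓ σ| ≤ ℓ τ) :
    exp (K * t) * u + exp (-K * t) * (∫ s in 0..t, θ s) - c₀ * t * exp (K * t)
      ≤ u + ∫ s in 0..t, ℓ s := by
  set P : ℝ → ℝ := fun s => u + ∫ σ in 0..s, ℓ σ with hP
  have hbarrier := exp_mul_mul_sub_le_add_integral hK hc₀ hu hℓ
    fun τ hτ => le_trans (by linarith [hθ_nonneg τ hτ]) (hℓ_ge τ hτ)
  set H : ℝ → ℝ := fun s => exp (K * s) * P s - exp (2 * K * s) * (u - c₀ * s)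
    - ∫ σ in 0..s, θ σ with hH
  have hH0 : H 0 = 0 := by simp [hH, hP]
  have hcontDiff : ContDiff ℝ 1 fun s => exp (2 * K * s) * (u - c₀ * s) := by fun_prop
  have hac : AbsolutelyContinuousOnInterval H 0 t :=
    ((hℓ.absolutelyContinuousOnInterval_exp_mul_add_integral K u).fun_sub
      hcontDiff.contDiffOn.absolutelyContinuousOnInterval).fun_sub
      (hθ.absolutelyContinuousOnInterval_intervalIntegral left_mem_uIcc)
  have hHt : 0 ≤ H t := by
    rw [← hH0]
    refine hac.le_of_ae_hasDerivAt_nonneg ht (f' := fun r => exp (K * r) * (ℓ r + K * P r)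
      - exp (2 * K * r) * (2 * K * (u - c₀ * r) - c₀) - θ r) ?_ (fun r hr => ?_)
    · filter_upwards [hℓ.ae_hasDerivAt_exp_mul_add_integral K u, hθ.ae_hasDerivAt_integral]
        with r hr hθr hrt
      have hrI : r ∈ uIcc 0 t := Ioo_subset_Icc_self.trans Icc_subset_uIcc hrt
      have hsmooth : HasDerivAt (fun s => exp (2 * K * s) * (u - c₀ * s))
          (exp (2 * K * r) * (2 * K * (u - c₀ * r) - c₀)) r :=
        (((hasDerivAt_id r).const_mul (2 * K)).exp.mul
          (((hasDerivAt_id r).const_mul c₀).const_sub u)).congr_deriv (by simp; ring)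
      exact ((hr hrI).sub hsmooth).sub (hθr hrI 0 left_mem_uIcc)
    · have hrI : r ∈ Icc 0 t := Ioo_subset_Icc_self hr
      have := add_exp_two_mul_mul_le_exp_mul_mul_add hK hc₀ hu hr.1.le (hθ_nonneg r hrI)
        (hbarrier r hrI) (hℓ_ge r hrI)
      show 0 ≤ exp (K * r) * (ℓ r + K * P r)
        - exp (2 * K * r) * (2 * K * (u - c₀ * r) - c₀) - θ r
      linarith
  have hE : exp (2 * K * t) = exp (K * t) * exp (K * t) := by rw [← exp_add]; ring_nf
  have hEpos := exp_pos (K * t)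
  rw [neg_mul, exp_neg, ← mul_le_mul_iff_right₀ hEpos]
  have : exp (K * t) * (exp (K * t) * u + (exp (K * t))⁻¹ * (∫ s in 0..t, θ s)
      - c₀ * t * exp (K * t)) = exp (2 * K * t) * (u - c₀ * t) + ∫ s in 0..t, θ s := by
    rw [hE]; field_simp; ring
  simp only [hH] at hHt
  linarith

end Comparison

theorem stmt7_general (n : ℕ) (K c₀ : ℝ) (hK : 0 < K) (hc₀ : 0 < c₀) (t : ℝ) (ht : 0 < t)
    (L : EuclideanSpace ℝ (Fin n) → ℝ → EuclideanSpace ℝ (Fin n) → ℝ)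
    (L₀ : EuclideanSpace ℝ (Fin n) → EuclideanSpace ℝ (Fin n) → ℝ)
    (θ₀ : ℝ → ℝ) (hθ₀_nonneg : ∀ r, 0 ≤ θ₀ r)
    (hL : ∀ x u v, L x u v ≥ L₀ x v - K * |u|)
    (hL₀ : ∀ x v, L₀ x v ≥ θ₀ ‖v‖ - c₀)
    (ξ : ℝ → EuclideanSpace ℝ (Fin n)) (ξ' : ℝ → EuclideanSpace ℝ (Fin n))
    (uξ : ℝ → ℝ) (u : ℝ) (hu_nonpos : u ≤ 0)
    (hLint : IntervalIntegrable (fun s => L (ξ s) (uξ s) (ξ' s)) volume 0 t)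
    (huξ : ∀ s ∈ Set.Icc 0 t, uξ s = u + ∫ τ in (0:ℝ)..s, L (ξ τ) (uξ τ) (ξ' τ))
    (hθint : IntervalIntegrable (fun s => θ₀ ‖ξ' s‖) volume 0 t) :
    uξ t ≥ Real.exp (K * t) * u + Real.exp (-K * t) * (∫ s in (0:ℝ)..t, θ₀ ‖ξ' s‖)
      - c₀ * t * Real.exp (K * t) := by
  rw [huξ t ⟨ht.le, le_rfl⟩]
  refine exp_mul_mul_add_exp_neg_mul_integral_sub_le_add_integral hK.le hc₀.le hu_nonpos ht.le
    hLint hθint (fun τ _ => hθ₀_nonneg _) fun τ hτ => ?_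
  rw [← huξ τ hτ]
  linarith [hL (ξ τ) (uξ τ) (ξ' τ), hL₀ (ξ τ) (ξ' τ)]

/-- lower bound for the fundamental solution along a curve with
initial datum `u ≤ 0`:
`u_ξ(t) ≥ e^{Kt} u + e^{-Kt} ∫_0^t θ₀(|ξ'|) - c₀ t e^{Kt}`. -/
theorem stmt7 (n : ℕ) (K c₀ : ℝ) (hK : 0 < K) (hc₀ : 0 < c₀) (t : ℝ) (ht : 0 < t)
    (L : EuclideanSpace ℝ (Fin n) → ℝ → EuclideanSpace ℝ (Fin n) → ℝ)
    (L₀ : EuclideanSpace ℝ (Fin n) → EuclideanSpace ℝ (Fin n) → ℝ)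
    (θ₀ : ℝ → ℝ) (hθ₀_nonneg : ∀ r, 0 ≤ θ₀ r) (hθ₀_mono : Monotone θ₀)
    (hθ₀_zero : θ₀ 0 = 0)
    (hL : ∀ x u v, L x u v ≥ L₀ x v - K * |u|)
    (hL₀ : ∀ x v, L₀ x v ≥ θ₀ ‖v‖ - c₀)
    (ξ : ℝ → EuclideanSpace ℝ (Fin n)) (ξ' : ℝ → EuclideanSpace ℝ (Fin n))
    (hξ : ∀ s ∈ Set.Icc 0 t, ξ s = ξ 0 + ∫ τ in (0:ℝ)..s, ξ' τ)
    (uξ : ℝ → ℝ) (u : ℝ) (hu0 : uξ 0 = u) (hu_nonpos : u ≤ 0)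
    (hLint : IntervalIntegrable (fun s => L (ξ s) (uξ s) (ξ' s)) volume 0 t)
    (huξ : ∀ s ∈ Set.Icc 0 t, uξ s = u + ∫ τ in (0:ℝ)..s, L (ξ τ) (uξ τ) (ξ' τ))
    (hθint : IntervalIntegrable (fun s => θ₀ ‖ξ' s‖) volume 0 t) :
    uξ t ≥ Real.exp (K * t) * u + Real.exp (-K * t) * (∫ s in (0:ℝ)..t, θ₀ ‖ξ' s‖)
      - c₀ * t * Real.exp (K * t) :=
  stmt7_general n K c₀ hK hc₀ t ht L L₀ θ₀ hθ₀_nonneg hL hL₀ ξ ξ' uξ u hu_nonpos hLint huξ hθint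
end

section
/- Under the same hypotheses, if instead $u_\xi(0)=u\ge 0$, then $u_\xi(t)\ge e^{-Kt}u + e^{-Kt}\int_0^t\theta_0(|\dot\xi(s)|)\,ds - c_0 t e^{Kt}$. -/
/-!
Put `θ = θ₀ ‖ξ'‖ ≥ 0` and `φ s = c₀ (e^{Ks} - 1) / K`, so that `φ' = c₀ + K φ`. Then
`H = u_ξ + φ` is absolutely continuous with `H' ≥ θ - K |H|` a.e. Such an `H` starting at
`H 0 = u ≥ 0` never becomes negative: on a stretch where `H < 0` the inequality reads `H' ≥ K H`,
so `e^{-Ks} H` is nondecreasing there. Once `H ≥ 0`, `(e^{Ks} H - ∫ θ)' ≥ (e^{Ks} - 1) θ ≥ 0`, so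
`H t ≥ e^{-Kt} (u + ∫₀ᵗ θ)`, and `φ t ≤ c₀ t e^{Kt}` because `e^x - 1 ≤ x e^x`.
-/

open MeasureTheory Set

theorem AbsolutelyContinuousOnInterval.le_of_ae_hasDerivAt_nonneg_s8 {F F' : ℝ → ℝ} {a b : ℝ}
    (hab : a ≤ b) (hF : AbsolutelyContinuousOnInterval F a b)
    (hF' : ∀ᵐ x, x ∈ Ioo a b → HasDerivAt F (F' x) x ∧ 0 ≤ F' x) : F a ≤ F b := by
  rw [← sub_nonneg, ← hF.integral_deriv_eq_sub]
  refine intervalIntegral.integral_nonneg_of_ae_restrict hab ?_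
  rw [← Measure.restrict_congr_set Ioo_ae_eq_Icc]
  filter_upwards [ae_restrict_mem measurableSet_Ioo, ae_restrict_of_ae hF'] with x hx hx'
  obtain ⟨hderiv, hnonneg⟩ := hx' hx
  simpa [hderiv.deriv] using hnonneg

theorem ContinuousOn.exists_last_nonneg {H : ℝ → ℝ} {a b : ℝ} (hab : a ≤ b)
    (hH : ContinuousOn H (Icc a b)) (ha : 0 ≤ H a) :
    ∃ c ∈ Icc a b, 0 ≤ H c ∧ ∀ x ∈ Ioc c b, H x < 0 := by
  set S := Icc a b ∩ H ⁻¹' Ici 0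
  have hSa : a ∈ S := ⟨left_mem_Icc.2 hab, ha⟩
  have hSbdd : BddAbove S := ⟨b, fun x hx => hx.1.2⟩
  have hc : sSup S ∈ S :=
    (hH.preimage_isClosed_of_isClosed isClosed_Icc isClosed_Ici).csSup_mem ⟨a, hSa⟩ hSbdd
  refine ⟨sSup S, hc.1, hc.2, fun x hx => ?_⟩
  by_contra! hx'
  exact (le_csSup hSbdd ⟨⟨(hc.1.1).trans hx.1.le, hx.2⟩, hx'⟩).not_gt hx.1

theorem hasDerivAt_exp_mul_sub (K a x : ℝ) :
    HasDerivAt (fun s => Real.exp (K * (s - a))) (Real.exp (K * (x - a)) * K) x := by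
  simpa using (((hasDerivAt_id x).sub_const a).const_mul K).exp

theorem absolutelyContinuousOnInterval_exp_mul_sub (K a b c : ℝ) :
    AbsolutelyContinuousOnInterval (fun s => Real.exp (K * (s - c))) a b :=
  ContDiffOn.absolutelyContinuousOnInterval (by fun_prop)

theorem AbsolutelyContinuousOnInterval.nonneg_of_ae_hasDerivAt_ge {H H' : ℝ → ℝ} {K a b : ℝ}
    (hH : AbsolutelyContinuousOnInterval H a b) (ha : 0 ≤ H a)
    (hH' : ∀ᵐ x, x ∈ Ioo a b → HasDerivAt H (H' x) x ∧ -(K * |H x|) ≤ H' x) :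
    ∀ x ∈ Icc a b, 0 ≤ H x := by
  intro b' hb'
  by_contra! hneg
  have hsub {c d : ℝ} (hc : c ∈ Icc a b) (hd : d ∈ Icc a b) : uIcc c d ⊆ uIcc a b :=
    uIcc_subset_uIcc (Icc_subset_uIcc hc) (Icc_subset_uIcc hd)
  have ha' : a ∈ Icc a b := ⟨le_rfl, hb'.1.trans hb'.2⟩
  obtain ⟨c, hc, hHc, hlt⟩ := (hH.continuousOn.mono <| (uIcc_of_le hb'.1).symm.trans_subset <|
    hsub ha' hb').exists_last_nonneg hb'.1 ha
  have hG : AbsolutelyContinuousOnInterval (fun s => Real.exp (-K * (s - c)) * H s) c b' :=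
    (absolutelyContinuousOnInterval_exp_mul_sub _ _ _ _).mul
      (hH.mono (hsub ⟨hc.1, hc.2.trans hb'.2⟩ hb'))
  have hmono := hG.le_of_ae_hasDerivAt_nonneg_s8 (F' := fun x =>
    Real.exp (-K * (x - c)) * -K * H x + Real.exp (-K * (x - c)) * H' x) hc.2 ?_
  · simp only [sub_self, mul_zero, Real.exp_zero, one_mul] at hmono
    nlinarith [Real.exp_pos (-K * (b' - c))]
  · filter_upwards [hH'] with x hx hxI
    obtain ⟨hd, hle⟩ := hx ⟨hc.1.trans_lt hxI.1, hxI.2.trans_le hb'.2⟩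
    refine ⟨(hasDerivAt_exp_mul_sub _ _ _).mul hd, ?_⟩
    rw [abs_of_neg (hlt x (Ioo_subset_Ioc_self hxI))] at hle
    have := Real.exp_pos (-K * (x - c))
    nlinarith

theorem AbsolutelyContinuousOnInterval.exp_mul_le_of_ae_hasDerivAt_ge {H H' θ : ℝ → ℝ}
    {K a b : ℝ} (hK : 0 ≤ K) (hab : a ≤ b) (hH : AbsolutelyContinuousOnInterval H a b)
    (ha : 0 ≤ H a) (hθ : IntervalIntegrable θ volume a b) (hθ_nonneg : ∀ x ∈ Icc a b, 0 ≤ θ x)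
    (hH' : ∀ᵐ x, x ∈ Ioo a b → HasDerivAt H (H' x) x ∧ θ x - K * |H x| ≤ H' x) :
    Real.exp (-K * (b - a)) * (H a + ∫ x in a..b, θ x) ≤ H b := by
  have hH_nonneg : ∀ x ∈ Icc a b, 0 ≤ H x := by
    refine hH.nonneg_of_ae_hasDerivAt_ge (K := K) ha (hH'.mono fun x hx hxI => ⟨(hx hxI).1, ?_⟩)
    linarith [(hx hxI).2, hθ_nonneg x (Ioo_subset_Icc_self hxI)]
  have hG : AbsolutelyContinuousOnInterval
      (fun s => Real.exp (K * (s - a)) * H s - ∫ x in a..s, θ x) a b :=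
    ((absolutelyContinuousOnInterval_exp_mul_sub _ _ _ _).mul hH).sub
      (hθ.absolutelyContinuousOnInterval_intervalIntegral left_mem_uIcc)
  have hmono := hG.le_of_ae_hasDerivAt_nonneg_s8 (F' := fun x =>
    Real.exp (K * (x - a)) * K * H x + Real.exp (K * (x - a)) * H' x - θ x) hab ?_
  · simp only [sub_self, mul_zero, Real.exp_zero, one_mul, intervalIntegral.integral_same,
      sub_zero] at hmono
    have hexp : Real.exp (-K * (b - a)) * Real.exp (K * (b - a)) = 1 := by
      rw [← Real.exp_add]; simp
    calc Real.exp (-K * (b - a)) * (H a + ∫ x in a..b, θ x)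
        ≤ Real.exp (-K * (b - a)) * (Real.exp (K * (b - a)) * H b) := by
          gcongr; linarith
      _ = H b := by rw [← mul_assoc, hexp, one_mul]
  · filter_upwards [hH', hθ.ae_hasDerivAt_integral] with x hx hΘ hxI
    obtain ⟨hd, hle⟩ := hx hxI
    have hxI' : x ∈ uIcc a b := Icc_subset_uIcc (Ioo_subset_Icc_self hxI)
    refine ⟨((hasDerivAt_exp_mul_sub _ _ _).mul hd).sub (hΘ hxI' a left_mem_uIcc), ?_⟩
    rw [abs_of_nonneg (hH_nonneg x (Ioo_subset_Icc_self hxI))] at hle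
    have hexp : 1 ≤ Real.exp (K * (x - a)) := Real.one_le_exp (mul_nonneg hK (sub_nonneg.2 hxI.1.le))
    have hθx := hθ_nonneg x (Ioo_subset_Icc_self hxI)
    nlinarith

theorem Real.exp_sub_one_le_mul_exp (x : ℝ) : Real.exp x - 1 ≤ x * Real.exp x := by
  have h := mul_le_mul_of_nonneg_right (Real.add_one_le_exp (-x)) (Real.exp_pos x).le
  rw [← Real.exp_add, neg_add_cancel, Real.exp_zero] at h
  linarith

theorem stmt8_general (n : ℕ) (K c₀ : ℝ) (hK : 0 < K) (hc₀ : 0 < c₀) (t : ℝ) (ht : 0 < t)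
    (L : EuclideanSpace ℝ (Fin n) → ℝ → EuclideanSpace ℝ (Fin n) → ℝ)
    (L₀ : EuclideanSpace ℝ (Fin n) → EuclideanSpace ℝ (Fin n) → ℝ)
    (θ₀ : ℝ → ℝ) (hθ₀_nonneg : ∀ r, 0 ≤ θ₀ r)
    (hL : ∀ x u v, L x u v ≥ L₀ x v - K * |u|)
    (hL₀ : ∀ x v, L₀ x v ≥ θ₀ ‖v‖ - c₀)
    (ξ : ℝ → EuclideanSpace ℝ (Fin n)) (ξ' : ℝ → EuclideanSpace ℝ (Fin n))
    (uξ : ℝ → ℝ) (u : ℝ) (hu_nonneg : 0 ≤ u)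
    (hLint : IntervalIntegrable (fun s => L (ξ s) (uξ s) (ξ' s)) volume 0 t)
    (huξ : ∀ s ∈ Set.Icc 0 t, uξ s = u + ∫ τ in (0:ℝ)..s, L (ξ τ) (uξ τ) (ξ' τ))
    (hθint : IntervalIntegrable (fun s => θ₀ ‖ξ' s‖) volume 0 t) :
    uξ t ≥ Real.exp (-K * t) * u + Real.exp (-K * t) * (∫ s in (0:ℝ)..t, θ₀ ‖ξ' s‖)
      - c₀ * t * Real.exp (K * t) := by
  set f := fun τ => L (ξ τ) (uξ τ) (ξ' τ)
  set φ := fun s => c₀ / K * (Real.exp (K * s) - 1)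
  have hφ_nonneg : ∀ s, 0 ≤ s → 0 ≤ φ s := fun s hs =>
    mul_nonneg (by positivity) (sub_nonneg.2 (Real.one_le_exp (by positivity)))
  have hφ' : ∀ s, HasDerivAt φ (c₀ + K * φ s) s := fun s => by
    refine ((((hasDerivAt_id s).const_mul K).exp.sub_const 1).const_mul (c₀ / K)).congr_deriv ?_
    simp only [φ, id]
    field_simp
    ring
  have hH : AbsolutelyContinuousOnInterval (fun s => u + φ s + ∫ τ in (0:ℝ)..s, f τ) 0 t :=
    (ContDiffOn.absolutelyContinuousOnInterval (by fun_prop)).add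
      (hLint.absolutelyContinuousOnInterval_intervalIntegral left_mem_uIcc)
  have key := hH.exp_mul_le_of_ae_hasDerivAt_ge (H' := fun s => c₀ + K * φ s + f s) hK.le ht.le
    (by simpa [φ] using hu_nonneg) hθint (fun _ _ => hθ₀_nonneg _) ?_
  · have hφ0 : φ 0 = 0 := by simp [φ]
    have hφt : φ t ≤ c₀ * t * Real.exp (K * t) := calc
      φ t ≤ c₀ / K * (K * t * Real.exp (K * t)) := by
        dsimp only [φ]; gcongr; exact Real.exp_sub_one_le_mul_exp _
      _ = c₀ * t * Real.exp (K * t) := by field_simp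
    rw [hφ0, intervalIntegral.integral_same, add_zero, add_zero, sub_zero, add_right_comm,
      ← huξ t ⟨ht.le, le_rfl⟩, mul_add] at key
    linarith
  · filter_upwards [hLint.ae_hasDerivAt_integral] with x hx hxI
    have hxI' : x ∈ uIcc 0 t := Icc_subset_uIcc (Ioo_subset_Icc_self hxI)
    refine ⟨((hφ' x).const_add u).add (hx hxI' 0 left_mem_uIcc), ?_⟩
    have hf := (hL (ξ x) (uξ x) (ξ' x)).trans' (sub_le_sub_right (hL₀ (ξ x) (ξ' x)) _)
    have habs : |uξ x| ≤ |uξ x + φ x| + φ x := by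
      simpa [abs_of_nonneg (hφ_nonneg x hxI.1.le)] using abs_sub (uξ x + φ x) (φ x)
    have hKabs := mul_le_mul_of_nonneg_left habs hK.le
    rw [mul_add] at hKabs
    rw [add_right_comm, ← huξ x (Ioo_subset_Icc_self hxI)]
    linarith

/-- lower bound for the fundamental solution along a curve with
initial datum `u ≥ 0`:
`u_ξ(t) ≥ e^{-Kt} u + e^{-Kt} ∫_0^t θ₀(|ξ'|) - c₀ t e^{Kt}`. -/
theorem stmt8 (n : ℕ) (K c₀ : ℝ) (hK : 0 < K) (hc₀ : 0 < c₀) (t : ℝ) (ht : 0 < t)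
    (L : EuclideanSpace ℝ (Fin n) → ℝ → EuclideanSpace ℝ (Fin n) → ℝ)
    (L₀ : EuclideanSpace ℝ (Fin n) → EuclideanSpace ℝ (Fin n) → ℝ)
    (θ₀ : ℝ → ℝ) (hθ₀_nonneg : ∀ r, 0 ≤ θ₀ r) (hθ₀_mono : Monotone θ₀)
    (hθ₀_zero : θ₀ 0 = 0)
    (hL : ∀ x u v, L x u v ≥ L₀ x v - K * |u|)
    (hL₀ : ∀ x v, L₀ x v ≥ θ₀ ‖v‖ - c₀)
    (ξ : ℝ → EuclideanSpace ℝ (Fin n)) (ξ' : ℝ → EuclideanSpace ℝ (Fin n))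
    (hξ : ∀ s ∈ Set.Icc 0 t, ξ s = ξ 0 + ∫ τ in (0:ℝ)..s, ξ' τ)
    (uξ : ℝ → ℝ) (u : ℝ) (hu0 : uξ 0 = u) (hu_nonneg : 0 ≤ u)
    (hLint : IntervalIntegrable (fun s => L (ξ s) (uξ s) (ξ' s)) volume 0 t)
    (huξ : ∀ s ∈ Set.Icc 0 t, uξ s = u + ∫ τ in (0:ℝ)..s, L (ξ τ) (uξ τ) (ξ' τ))
    (hθint : IntervalIntegrable (fun s => θ₀ ‖ξ' s‖) volume 0 t) :
    uξ t ≥ Real.exp (-K * t) * u + Real.exp (-K * t) * (∫ s in (0:ℝ)..t, θ₀ ‖ξ' s‖)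
      - c₀ * t * Real.exp (K * t) :=
  stmt8_general n K c₀ hK hc₀ t ht L L₀ θ₀ hθ₀_nonneg hL hL₀ ξ ξ' uξ u hu_nonneg hLint huξ hθint
end
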